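/- Suppose dim_ℂ R = 4. Then for Q ∈ S ⊗ R one has β(Q, Q) = 0 if and only if there exist s₁, s₂ ∈ S and r₁, r₂ ∈ R with ω(r₁, r₂) = 0 such that Q = s₁ ⊗ r₁ + s₂ ⊗ r₂. In particular a rank-two supercharge Q = ξ₁ ⊗ r₁ + ξ₂ ⊗ r₂ is square-zero precisely when the single quadratic condition ω(r₁, r₂) = 0 holds, and every square-zero supercharge of the N=(2,0) supertranslation algebra is either minimal (rank ≤ 1) or nonminimal (rank two with ω(r₁, r₂) = 0). -/

import Mathlib

open TensorProduct ExteriorAlgebra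

noncomputable def wedge {S : Type} [AddCommGroup S] [Module ℂ S] (s t : S) : ⋀[ℂ]^2 S :=
  ⟨ι ℂ s * ι ℂ t, by
    show _ ∈ LinearMap.range (ι ℂ : S →ₗ[ℂ] ExteriorAlgebra ℂ S) ^ 2
    rw [pow_two]
    exact Submodule.mul_mem_mul (LinearMap.mem_range_self _ s) (LinearMap.mem_range_self _ t)⟩

/-!
View `Q ∈ S ⊗ R` as the linear map `q : S* → R`, `φ ↦ (φ ⊗ id) Q`. Pairing `β Q Q ∈ ⋀²S` with
`φ ∧ ψ` gives `2 ω (q φ) (q ψ)`, so `β Q Q = 0` makes the image of `q` an `ω`-isotropic subspace.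
Since `ω` is nondegenerate on the 4-dimensional `R`, that image is spanned by two vectors `r₁, r₂`
with `ω r₁ r₂ = 0`, and expanding `Q` in a basis of `S` gives `Q = s₁ ⊗ r₁ + s₂ ⊗ r₂`.
-/

open Module

namespace TensorProduct

variable {K M N : Type*} [Field K] [AddCommGroup M] [Module K M] [AddCommGroup N] [Module K N]

variable (K M N) in
noncomputable def homFromDual : M ⊗[K] N →ₗ[K] Dual K M →ₗ[K] N :=
  dualTensorHom K (Dual K M) N ∘ₗ (Dual.eval K M).rTensor N

@[simp]
theorem homFromDual_tmul (m : M) (n : N) (φ : Dual K M) :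
    homFromDual K M N (m ⊗ₜ n) φ = φ m • n := by
  simp [homFromDual]

theorem sum_basis_tmul_homFromDual {ι : Type*} [Fintype ι] (b : Basis ι K M) (Q : M ⊗[K] N) :
    ∑ i, b i ⊗ₜ homFromDual K M N Q (b.coord i) = Q := by
  induction Q using TensorProduct.induction_on with
  | zero => simp
  | tmul m n =>
    simp only [homFromDual_tmul, Basis.coord_apply, tmul_smul, smul_tmul', ← sum_tmul,
      b.sum_repr]
  | add x y hx hy =>
    simp only [map_add, LinearMap.add_apply, tmul_add, Finset.sum_add_distrib, hx, hy]

theorem exists_eq_sum_tmul_of_homFromDual_mem_span [FiniteDimensional K M] {ι : Type*}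
    [Fintype ι] (Q : M ⊗[K] N) (v : ι → N)
    (hQ : ∀ φ, homFromDual K M N Q φ ∈ Submodule.span K (Set.range v)) :
    ∃ s : ι → M, Q = ∑ j, s j ⊗ₜ v j := by
  let b := finBasis K M
  choose c hc using fun i => Submodule.mem_span_range_iff_exists_fun K |>.1 (hQ (b.coord i))
  refine ⟨fun j => ∑ i, c i j • b i, ?_⟩
  conv_lhs => rw [← sum_basis_tmul_homFromDual b Q]
  simp only [← hc, tmul_sum, sum_tmul, tmul_smul, smul_tmul']
  exact Finset.sum_comm

end TensorProduct

theorem Submodule.exists_span_range_eq_of_finrank_le {K V : Type*} [DivisionRing K]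
    [AddCommGroup V] [Module K V] (W : Submodule K V) [FiniteDimensional K W] {n : ℕ}
    (hn : finrank K W ≤ n) : ∃ v : Fin n → V, span K (Set.range v) = W := by
  let b := finBasis K W
  let v : Fin n → V := fun j => if hj : (j : ℕ) < finrank K W then b ⟨j, hj⟩ else 0
  have hv : ∀ i, v (Fin.castLE hn i) = b i := fun i => dif_pos i.2
  refine ⟨v, le_antisymm (span_le.2 ?_) fun x hx => ?_⟩
  · rintro _ ⟨j, rfl⟩
    by_cases hj : (j : ℕ) < finrank K W <;> simp [v, hj]
  · rw [← Subtype.coe_mk x hx, ← b.sum_repr ⟨x, hx⟩]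
    simp only [coe_sum, coe_smul, ← hv]
    exact sum_mem fun i _ => smul_mem _ _ (subset_span ⟨_, rfl⟩)

theorem LinearMap.BilinForm.two_mul_finrank_le_of_le_orthogonal {K V : Type*} [Field K]
    [AddCommGroup V] [Module K V] [FiniteDimensional K V] {B : LinearMap.BilinForm K V}
    (hB : B.SeparatingLeft) {W : Submodule K V} (hW : W ≤ B.orthogonal W) :
    2 * finrank K W ≤ finrank K V := by
  have h := finrank_add_finrank_orthogonal' (B := B) W
  rw [LinearMap.separatingLeft_iff_ker_eq_bot.mp hB, inf_bot_eq, finrank_bot, add_zero] at h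
  have := Submodule.finrank_mono hW
  omega

theorem wedge_eq_ιMulti {S : Type} [AddCommGroup S] [Module ℂ S] (s t : S) :
    wedge s t = exteriorPower.ιMulti ℂ 2 ![s, t] := by
  ext
  simp [wedge, ExteriorAlgebra.ιMulti_apply]

theorem pairingDual_wedge {S : Type} [AddCommGroup S] [Module ℂ S] (φ ψ : Dual ℂ S) (s t : S) :
    exteriorPower.pairingDual ℂ S 2 (exteriorPower.ιMulti ℂ 2 ![φ, ψ]) (wedge s t) =
      φ s * ψ t - ψ s * φ t := by
  simp [wedge_eq_ιMulti, Matrix.det_fin_two]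

section

variable {S R : Type} [AddCommGroup S] [Module ℂ S] [AddCommGroup R] [Module ℂ R]
  {ω : LinearMap.BilinForm ℂ R} {β : (S ⊗[ℂ] R) →ₗ[ℂ] (S ⊗[ℂ] R) →ₗ[ℂ] ⋀[ℂ]^2 S}

theorem pairingDual_bracket
    (hβ : ∀ (s s' : S) (r r' : R), β (s ⊗ₜ[ℂ] r) (s' ⊗ₜ[ℂ] r') = ω r r' • wedge s s')
    (φ ψ : Dual ℂ S) (x y : S ⊗[ℂ] R) :
    exteriorPower.pairingDual ℂ S 2 (exteriorPower.ιMulti ℂ 2 ![φ, ψ]) (β x y) =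
      ω (homFromDual ℂ S R x φ) (homFromDual ℂ S R y ψ) -
        ω (homFromDual ℂ S R x ψ) (homFromDual ℂ S R y φ) := by
  induction x using TensorProduct.induction_on with
  | zero => simp
  | add x x' hx hx' => simp only [map_add, LinearMap.add_apply, hx, hx']; ring
  | tmul s r =>
    induction y using TensorProduct.induction_on with
    | zero => simp
    | add y y' hy hy' => simp only [map_add, LinearMap.add_apply, hy, hy']; ring
    | tmul s' r' => simp [hβ, pairingDual_wedge]; ring

theorem range_homFromDual_le_orthogonal (hω : LinearMap.IsAlt ω)
    (hβ : ∀ (s s' : S) (r r' : R), β (s ⊗ₜ[ℂ] r) (s' ⊗ₜ[ℂ] r') = ω r r' • wedge s s')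
    {Q : S ⊗[ℂ] R} (hQ : β Q Q = 0) :
    LinearMap.range (homFromDual ℂ S R Q) ≤
      ω.orthogonal (LinearMap.range (homFromDual ℂ S R Q)) := by
  rintro _ ⟨ψ, rfl⟩
  refine LinearMap.BilinForm.mem_orthogonal_iff.2 ?_
  rintro _ ⟨φ, rfl⟩
  have h := pairingDual_bracket hβ φ ψ Q Q
  rw [hQ, map_zero, ← hω.neg (homFromDual ℂ S R Q φ) (homFromDual ℂ S R Q ψ)] at h
  have h2 : (2 : ℂ) * ω (homFromDual ℂ S R Q φ) (homFromDual ℂ S R Q ψ) = 0 := by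
    linear_combination -h
  simpa using h2

end

/-- If `dim_ℂ R = 4` (the `N=(2,0)` case), then `Q ∈ S ⊗ R` satisfies `β Q Q = 0` if and only
if `Q = s₁ ⊗ r₁ + s₂ ⊗ r₂` with `ω r₁ r₂ = 0`: every square-zero supercharge is either minimal
(rank ≤ 1) or nonminimal (rank two, subject to the single quadratic condition `ω r₁ r₂ = 0`). -/
theorem square_zero_iff_rank_two_isotropic_of_dim_four
    {S R : Type} [AddCommGroup S] [Module ℂ S] [FiniteDimensional ℂ S]
    [AddCommGroup R] [Module ℂ R] [FiniteDimensional ℂ R]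
    (hR : Module.finrank ℂ R = 4)
    (ω : R →ₗ[ℂ] R →ₗ[ℂ] ℂ)
    (halt : ∀ r : R, ω r r = 0)
    (hnd : ∀ r : R, (∀ r' : R, ω r r' = 0) → r = 0)
    (β : (S ⊗[ℂ] R) →ₗ[ℂ] (S ⊗[ℂ] R) →ₗ[ℂ] ⋀[ℂ]^2 S)
    (hβ : ∀ (s s' : S) (r r' : R),
      β (s ⊗ₜ[ℂ] r) (s' ⊗ₜ[ℂ] r') = ω r r' • wedge s s')
    (Q : S ⊗[ℂ] R) :
    β Q Q = 0 ↔
      ∃ (s₁ s₂ : S) (r₁ r₂ : R),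
        ω r₁ r₂ = 0 ∧ Q = s₁ ⊗ₜ[ℂ] r₁ + s₂ ⊗ₜ[ℂ] r₂ := by
  constructor
  · intro hQ
    set W := LinearMap.range (homFromDual ℂ S R Q)
    have hW : W ≤ LinearMap.BilinForm.orthogonal ω W :=
      range_homFromDual_le_orthogonal halt hβ hQ
    have hdim : finrank ℂ W ≤ 2 := by
      have := LinearMap.BilinForm.two_mul_finrank_le_of_le_orthogonal hnd hW
      omega
    obtain ⟨r, hr⟩ := W.exists_span_range_eq_of_finrank_le hdim
    have hrW : ∀ i, r i ∈ W := fun i => hr ▸ Submodule.subset_span ⟨i, rfl⟩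
    obtain ⟨s, rfl⟩ := exists_eq_sum_tmul_of_homFromDual_mem_span Q r
      fun φ => hr ▸ LinearMap.mem_range_self _ φ
    exact ⟨s 0, s 1, r 0, r 1, hW (hrW 1) _ (hrW 0), Fin.sum_univ_two _⟩
  · rintro ⟨s₁, s₂, r₁, r₂, h₁₂, rfl⟩
    have h₂₁ : ω r₂ r₁ = 0 := by rw [← LinearMap.IsAlt.neg halt, h₁₂, neg_zero]
    simp [hβ, halt, h₁₂, h₂₁]
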